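/- Suppose γ_M(Y) ≥ 0 for every Y ⊆ E(M), and let X be a flat of M. Then for every x ∈ X such that x is not a coloop of the restriction M|X, there exists a cyclic flat Z_x of M with Z_x ⊆ X, x ∈ Z_x, and γ_M(Z_x) > 0. -/

import Mathlib

/-!
The elements of the flat `X` that lie in a circuit inside `X` form a cyclic flat `D ⊆ X`
containing `x`. Unfolding the recursion, `∑_{Z ∈ Z(M), Z ⊆ D} γ(Z) = n(D)`, whereas for any `Y`
with `γ(Y) ≥ 0` the same sum over `Z ⊆ Y` is at most `n(Y)`. As `x` lies in a circuit of `D`,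
`n(D - x) = n(D) - 1`, and the cyclic flats below `D` avoiding `x` are those below `D - x`;
hence the cyclic flats `Z ⊆ D` through `x` have `γ`-sum at least `1`, so one has `γ(Z) > 0`.
-/

open Set Matroid
open scoped Classical

namespace Paper

variable {α : Type*}

/-- A circuit of a matroid: a minimal dependent set. -/
def Circuit (M : Matroid α) (C : Set α) : Prop :=
  M.Dep C ∧ ∀ D ⊂ C, M.Indep D

/-- A coloop: an element of the ground set lying in no circuit. -/
def Coloop (M : Matroid α) (x : α) : Prop :=
  x ∈ M.E ∧ ∀ C, Circuit M C → x ∉ C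

/-- The set of coloops of a matroid. -/
def coloops (M : Matroid α) : Set α := {x | Coloop M x}

/-- A cyclic set: a subset of the ground set each of whose elements lies in a
circuit contained in the set (equivalently, the restriction has no coloops). -/
def Cyclic (M : Matroid α) (X : Set α) : Prop :=
  X ⊆ M.E ∧ ∀ x ∈ X, ∃ C, Circuit M C ∧ C ⊆ X ∧ x ∈ C

/-- A cyclic flat: a cyclic set that is also a flat. -/
def CyclicFlat (M : Matroid α) (X : Set α) : Prop :=
  Cyclic M X ∧ M.IsFlat X

/-- The rank of a set: the largest cardinality of an independent subset. -/
noncomputable def rk (M : Matroid α) (X : Set α) : ℕ :=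
  sSup (Set.ncard '' {I | M.Indep I ∧ I ⊆ X})

/-- The nullity of a set: `n(X) = |X| − r(X)`. -/
noncomputable def nullity (M : Matroid α) (X : Set α) : ℤ :=
  (X.ncard : ℤ) - rk M X

/-- Deletion of a single element: `M \ e`. -/
noncomputable def deleteElem (M : Matroid α) (e : α) : Matroid α :=
  M ↾ (M.E \ {e})

variable [Fintype α] [DecidableEq α]

/-- The `γ` function: `γ_M(X) = n(X) − Σ_{Z ∈ Z(M), Z ⊊ X} γ_M(Z)`. -/
noncomputable def gamma (M : Matroid α) (X : Finset α) : ℤ :=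
  nullity M ↑X -
    ∑ Z ∈ (Finset.univ.filter (fun Z : Finset α => CyclicFlat M ↑Z ∧ Z ⊂ X)).attach,
      gamma M Z.1
termination_by X.card
decreasing_by
  exact Finset.card_lt_card (Finset.mem_filter.mp Z.2).2.2

end Paper

namespace Paper

variable {α : Type*}

section General

variable {M : Matroid α} {X C I : Set α} {e : α}

lemma circuit_iff_isCircuit : Circuit M C ↔ M.IsCircuit C :=
  isCircuit_iff_forall_ssubset.symm

lemma exists_isCircuit_of_not_coloop_restrict (hX : X ⊆ M.E) (he : e ∈ X)
    (h : ¬ Coloop (M ↾ X) e) : ∃ C, M.IsCircuit C ∧ C ⊆ X ∧ e ∈ C := by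
  simp only [Coloop, restrict_ground_eq, he, true_and, not_forall, not_not] at h
  obtain ⟨C, hC, heC⟩ := h
  rw [circuit_iff_isCircuit, restrict_isCircuit_iff hX] at hC
  exact ⟨C, hC.1, hC.2, heC⟩

lemma rk_eq_ncard_of_isBasis' (hI : M.IsBasis' I X) (hfin : I.Finite) : rk M X = I.ncard := by
  refine IsGreatest.csSup_eq ⟨⟨I, ⟨hI.indep, hI.subset⟩, rfl⟩, ?_⟩
  rintro _ ⟨J, ⟨hJ, hJX⟩, rfl⟩
  have hJI : J.encard ≤ I.encard := hI.encard_eq_eRk ▸ hJ.encard_le_eRk_of_subset hJX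
  exact_mod_cast (ncard_le_encard J).trans (hJI.trans_eq hfin.cast_ncard_eq.symm)

lemma cast_rk_eq_eRk (hX : M.IsRkFinite X) : (rk M X : ℕ∞) = M.eRk X := by
  obtain ⟨I, hI, hfin⟩ := hX.exists_finite_isBasis'
  rw [rk_eq_ncard_of_isBasis' hI hfin, hfin.cast_ncard_eq, hI.encard_eq_eRk]

lemma rk_insert_of_mem_closure (hX : M.IsRkFinite X) (he : e ∈ M.closure X) :
    rk M (insert e X) = rk M X := by
  have hrk : M.eRk (insert e X) = M.eRk X := by
    rw [← eRk_insert_closure_eq, insert_eq_of_mem he, eRk_closure_eq]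
  exact_mod_cast (cast_rk_eq_eRk (hX.insert e)).trans (hrk.trans (cast_rk_eq_eRk hX).symm)

lemma nullity_insert_of_mem_closure (hX : X.Finite) (heX : e ∉ X) (he : e ∈ M.closure X) :
    nullity M (insert e X) = nullity M X + 1 := by
  obtain ⟨I, hI⟩ := M.exists_isBasis' X
  have hXfin : M.IsRkFinite X := hI.isRkFinite_of_finite (hX.subset hI.subset)
  simp only [nullity, rk_insert_of_mem_closure hXfin he, ncard_insert_of_notMem heX hX]
  push_cast
  ring

def cyclicPart (M : Matroid α) (X : Set α) : Set α :=
  {e | ∃ C, M.IsCircuit C ∧ C ⊆ X ∧ e ∈ C}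

lemma cyclicPart_subset (M : Matroid α) (X : Set α) : cyclicPart M X ⊆ X :=
  fun _ ⟨_, _, hCX, heC⟩ ↦ hCX heC

lemma cyclic_cyclicPart (M : Matroid α) (X : Set α) : Cyclic M (cyclicPart M X) :=
  ⟨fun _ ⟨_, hC, _, heC⟩ ↦ hC.subset_ground heC, fun _ ⟨C, hC, hCX, heC⟩ ↦
    ⟨C, circuit_iff_isCircuit.2 hC, fun _ hfC ↦ ⟨C, hC, hCX, hfC⟩, heC⟩⟩

lemma cyclicFlat_cyclicPart (hX : M.IsFlat X) : CyclicFlat M (cyclicPart M X) := by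
  refine ⟨cyclic_cyclicPart M X, isFlat_iff_closure_eq.2 (subset_antisymm (fun e he ↦ ?_)
    (M.subset_closure _ (cyclic_cyclicPart M X).1))⟩
  by_contra heD
  have heX : e ∈ X := hX.closure ▸ M.closure_subset_closure (cyclicPart_subset M X) he
  obtain ⟨C, hCD, hC, heC⟩ := exists_isCircuit_of_mem_closure he heD
  exact heD ⟨C, hC, hCD.trans (insert_subset heX (cyclicPart_subset M X)), heC⟩

end General

variable [Fintype α] [DecidableEq α]

noncomputable def cyclicFlatsIn (M : Matroid α) (Y : Finset α) : Finset (Finset α) :=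
  Finset.univ.filter fun Z ↦ CyclicFlat M ↑Z ∧ Z ⊆ Y

section Gamma

variable {M : Matroid α} {Y D : Finset α} {x : α}

lemma gamma_eq_nullity_sub (M : Matroid α) (Y : Finset α) :
    gamma M Y = nullity M ↑Y - ∑ Z ∈ (cyclicFlatsIn M Y).erase Y, gamma M Z := by
  have hfilter : Finset.univ.filter (fun Z : Finset α ↦ CyclicFlat M ↑Z ∧ Z ⊂ Y) =
      (cyclicFlatsIn M Y).erase Y := by
    ext Z
    simp only [cyclicFlatsIn, ssubset_iff_subset_ne, ne_eq, Finset.mem_filter, Finset.mem_univ,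
      true_and, Finset.mem_erase]
    tauto
  rw [gamma, Finset.sum_attach, hfilter]

lemma CyclicFlat.sum_gamma_cyclicFlatsIn (hY : CyclicFlat M ↑Y) :
    ∑ Z ∈ cyclicFlatsIn M Y, gamma M Z = nullity M ↑Y := by
  have hYY : Y ∈ cyclicFlatsIn M Y := by simp [cyclicFlatsIn, hY]
  rw [← Finset.add_sum_erase _ _ hYY, gamma_eq_nullity_sub]
  ring

lemma sum_gamma_cyclicFlatsIn_le (hY : 0 ≤ gamma M Y) :
    ∑ Z ∈ cyclicFlatsIn M Y, gamma M Z ≤ nullity M ↑Y := by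
  by_cases hcf : CyclicFlat M ↑Y
  · exact hcf.sum_gamma_cyclicFlatsIn.le
  · have hYY : Y ∉ cyclicFlatsIn M Y := by simp [cyclicFlatsIn, hcf]
    have := gamma_eq_nullity_sub M Y
    rw [Finset.erase_eq_of_notMem hYY] at this
    linarith

lemma CyclicFlat.one_le_sum_gamma_mem (hD : CyclicFlat M ↑D) (hxD : x ∈ D)
    (hγ : 0 ≤ gamma M (D.erase x)) :
    1 ≤ ∑ Z ∈ (cyclicFlatsIn M D).filter (x ∈ ·), gamma M Z := by
  have herase : (cyclicFlatsIn M D).filter (x ∉ ·) = cyclicFlatsIn M (D.erase x) := by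
    ext Z
    simp [cyclicFlatsIn, Finset.subset_erase, and_assoc]
  have hnullity : nullity M ↑D = nullity M ↑(D.erase x) + 1 := by
    obtain ⟨C, hC, hCD, hxC⟩ := hD.1.2 x hxD
    have hxcl : x ∈ M.closure ↑(D.erase x) :=
      M.closure_subset_closure (by rw [Finset.coe_erase]; exact sdiff_subset_sdiff_left hCD)
        ((circuit_iff_isCircuit.1 hC).mem_closure_sdiff_singleton_of_mem hxC)
    rw [← nullity_insert_of_mem_closure (Finset.finite_toSet _) (by simp) hxcl,
      Finset.coe_erase, insert_sdiff_singleton, insert_eq_of_mem hxD]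
  have hsplit := Finset.sum_filter_add_sum_filter_not (cyclicFlatsIn M D) (x ∈ ·) (gamma M)
  rw [herase, hD.sum_gamma_cyclicFlatsIn] at hsplit
  linarith [sum_gamma_cyclicFlatsIn_le hγ]

end Gamma

theorem statement_5 (M : Matroid α)
    (h : ∀ Y : Finset α, ↑Y ⊆ M.E → 0 ≤ gamma M Y)
    (X : Finset α) (hflat : M.IsFlat ↑X) :
    ∀ x ∈ X, ¬ Coloop (M ↾ (↑X : Set α)) x →
      ∃ Z : Finset α, CyclicFlat M ↑Z ∧ Z ⊆ X ∧ x ∈ Z ∧ 0 < gamma M Z := by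
  intro x hxX hncol
  obtain ⟨C, hC, hCX, hxC⟩ :=
    exists_isCircuit_of_not_coloop_restrict hflat.subset_ground hxX hncol
  set D := (cyclicPart M ↑X).toFinset
  have hD : CyclicFlat M ↑D := by simpa [D] using cyclicFlat_cyclicPart hflat
  have hDX : D ⊆ X := by simpa [D, ← Finset.coe_subset] using cyclicPart_subset M ↑X
  have hxD : x ∈ D := by simpa [D] using ⟨C, hC, hCX, hxC⟩
  have hsum := hD.one_le_sum_gamma_mem hxD
    (h _ ((Finset.coe_subset.2 (D.erase_subset x)).trans hD.1.1))
  obtain ⟨Z, hZ, hγZ⟩ := Finset.exists_lt_of_sum_lt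
    (Finset.sum_const_zero.trans_lt (zero_lt_one.trans_le hsum))
  simp only [cyclicFlatsIn, Finset.mem_filter, Finset.mem_univ, true_and] at hZ
  exact ⟨Z, hZ.1.1, hZ.1.2.trans hDX, hZ.2, hγZ⟩

end Paper
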